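/- arXiv:1508.03849 — 4 statements merged into one kernel-verified Lean document; each statement's English description precedes it below -/
import Mathlib

section
/- Let G be a group satisfying hypothesis (H*) and let a, b be involutions of G. Then (a * b)^9 = 1, and there exists an involution c of G with c * b * c⁻¹ = a. In particular any two involutions of G are conjugate. -/
/-- A group `K` is a locally cyclic 2-group: every element has order a power of 2
and every finitely generated subgroup is cyclic. -/
def IsLocallyCyclic2Group (K : Type*) [Group K] : Prop :=
  (∀ k : K, ∃ n : ℕ, orderOf k = 2 ^ n) ∧
  ∀ S : Subgroup K, S.FG → IsCyclic S

/-- Hypothesis (H): `G` is periodic, `π(G) = {2, 3}`, and the order of the product of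
any two elements of order at most 4 does not exceed 9. -/
def HypH (G : Type*) [Group G] : Prop :=
  (∀ g : G, IsOfFinOrder g) ∧
  (∀ p : ℕ, p.Prime → ((∃ g : G, p ∣ orderOf g) ↔ p = 2 ∨ p = 3)) ∧
  ∀ x y : G, orderOf x ≤ 4 → orderOf y ≤ 4 → orderOf (x * y) ≤ 9

/-- Hypothesis (H*): `G` satisfies (H) and the centralizer of every involution of `G`
is a locally cyclic 2-group. -/
def HypHStar (G : Type*) [Group G] : Prop :=
  HypH G ∧ ∀ a : G, a ≠ 1 → a ^ 2 = 1 →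
    IsLocallyCyclic2Group (Subgroup.centralizer {a})

/-- In the cyclic group generated by any element `g`, there is at most one
element of order 2. -/
lemma uniq_involution_aux {H : Type*} [Group H] {g x y : H}
    (hx : x ∈ Subgroup.zpowers g) (hy : y ∈ Subgroup.zpowers g)
    (hx2 : orderOf x = 2) (hy2 : orderOf y = 2) : x = y := by
  have key : ∀ w : H, w ∈ Subgroup.zpowers g → orderOf w = 2 →
      w = g ^ (orderOf g / 2) := by
    intro w hw hw2
    obtain ⟨k, rfl⟩ := Subgroup.mem_zpowers_iff.mp hw
    have h1 : (g ^ k) ^ (2 : ℕ) = 1 := by rw [← hw2]; exact pow_orderOf_eq_one _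
    have h2 : g ^ (2 * k) = 1 := by
      rw [mul_comm, zpow_mul]
      exact_mod_cast h1
    have hd : (orderOf g : ℤ) ∣ 2 * k := orderOf_dvd_iff_zpow_eq_one.mpr h2
    have hnd : ¬ (orderOf g : ℤ) ∣ k := by
      intro h
      have : g ^ k = 1 := orderOf_dvd_iff_zpow_eq_one.mp h
      rw [this, orderOf_one] at hw2
      omega
    obtain ⟨q, hq⟩ := hd
    have hqodd : ¬ (2 : ℤ) ∣ q := by
      rintro ⟨r, rfl⟩
      exact hnd ⟨r, by linarith⟩
    have h2n : (2 : ℤ) ∣ (orderOf g : ℤ) := by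
      have hdd : (2:ℤ) ∣ (orderOf g : ℤ) * q := ⟨k, hq.symm⟩
      rcases (Int.prime_two.dvd_mul.mp hdd) with h | h
      · exact h
      · exact absurd h hqodd
    have h2n' : 2 ∣ orderOf g := by exact_mod_cast h2n
    set m : ℕ := orderOf g / 2 with hm
    have hnm : (orderOf g : ℤ) = 2 * m := by
      have h := Nat.div_mul_cancel h2n'
      omega
    have hk : k = (m : ℤ) * q := by
      rw [hnm] at hq; linarith
    obtain ⟨r, hr⟩ : ∃ r, q = 2 * r + 1 := ⟨q / 2, by omega⟩
    have hgm2 : (g ^ (m : ℤ)) ^ (2:ℤ) = 1 := by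
      rw [← zpow_mul, mul_comm, ← hnm]
      exact_mod_cast pow_orderOf_eq_one g
    calc g ^ k = g ^ ((m:ℤ) * (2 * r + 1)) := by rw [hk, hr]
      _ = ((g ^ (m:ℤ)) ^ (2:ℤ)) ^ r * g ^ (m:ℤ) := by
            rw [← zpow_mul, ← zpow_mul, ← zpow_add]; ring_nf
      _ = g ^ (m : ℕ) := by rw [hgm2, one_zpow, one_mul, zpow_natCast]
  rw [key x hx hx2, key y hy hy2]

/-- Lemma 1: if `a` and `b` are involutions of a group satisfying (H*), then `(a*b)^9 = 1`
and `a` and `b` are conjugate by an involution. -/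
theorem statement_5 (G : Type*) [Group G] (hG : HypHStar G)
    (a b : G) (ha1 : a ≠ 1) (ha2 : a ^ 2 = 1) (hb1 : b ≠ 1) (hb2 : b ^ 2 = 1) :
    (a * b) ^ 9 = 1 ∧ ∃ c : G, c ≠ 1 ∧ c ^ 2 = 1 ∧ c * b * c⁻¹ = a := by
  obtain ⟨⟨hper, hpi, hord⟩, hcent⟩ := hG
  haveI : Fact (Nat.Prime 2) := ⟨Nat.prime_two⟩
  have haa : a * a = 1 := by rw [← sq]; exact ha2
  have hbb : b * b = 1 := by rw [← sq]; exact hb2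
  have hainv : a⁻¹ = a := inv_eq_of_mul_eq_one_right haa
  have hbinv : b⁻¹ = b := inv_eq_of_mul_eq_one_right hbb
  have horda : orderOf a = 2 := orderOf_eq_prime ha2 ha1
  have hordb : orderOf b = 2 := orderOf_eq_prime hb2 hb1
  set t := a * b with ht
  have hle : orderOf t ≤ 9 := hord a b (by omega) (by omega)
  have hnz : orderOf t ≠ 0 := (orderOf_pos_iff.mpr (hper t)).ne'
  have hata : a * t * a⁻¹ = t⁻¹ := by
    rw [ht, hainv, mul_inv_rev, hainv, hbinv]
    calc a * (a * b) * a = (a * a) * (b * a) := by group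
      _ = b * a := by rw [haa, one_mul]
  have hbtb : b * t * b⁻¹ = t⁻¹ := by
    rw [ht, hbinv, mul_inv_rev, hainv, hbinv]
    calc b * (a * b) * b = (b * a) * (b * b) := by group
      _ = b * a := by rw [hbb, mul_one]
  -- `orderOf t` is odd
  have hodd : ¬ 2 ∣ orderOf t := by
    intro h2
    set n := orderOf t with hn
    set m := n / 2 with hm
    set z := t ^ m with hz
    have hmn : m * 2 = n := Nat.div_mul_cancel h2
    have hz2 : z ^ 2 = 1 := by
      rw [hz, ← pow_mul, hmn, hn]
      exact pow_orderOf_eq_one t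
    have hz1 : z ≠ 1 := by
      intro h
      have hd : n ∣ m := orderOf_dvd_of_pow_eq_one (h ▸ rfl : t ^ m = 1)
      have : n ≤ m := Nat.le_of_dvd (by omega) hd
      omega
    have hzinv : z⁻¹ = z := inv_eq_of_mul_eq_one_right (by rw [← sq]; exact hz2)
    have haz : a ∈ Subgroup.centralizer ({z} : Set G) := by
      rw [Subgroup.mem_centralizer_iff]
      rintro h rfl
      have : a * z * a⁻¹ = z := by
        rw [hz, ← conj_pow, hata, inv_pow, ← hz, hzinv]
      calc z * a = (a * z * a⁻¹) * a := by rw [this]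
        _ = a * z := by group
    have hbz : b ∈ Subgroup.centralizer ({z} : Set G) := by
      rw [Subgroup.mem_centralizer_iff]
      rintro h rfl
      have : b * z * b⁻¹ = z := by
        rw [hz, ← conj_pow, hbtb, inv_pow, ← hz, hzinv]
      calc z * b = (b * z * b⁻¹) * b := by rw [this]
        _ = b * z := by group
    obtain ⟨-, h2c⟩ := hcent z hz1 hz2
    set K := Subgroup.centralizer ({z} : Set G) with hK
    set a' : K := ⟨a, haz⟩ with ha'
    set b' : K := ⟨b, hbz⟩ with hb'
    set S : Subgroup K := Subgroup.closure {a', b'} with hS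
    have hSfg : S.FG := (Subgroup.fg_iff S).mpr ⟨{a', b'}, rfl, Set.toFinite _⟩
    obtain ⟨g, hgen⟩ := (h2c S hSfg).exists_generator
    set f : S →* G := K.subtype.comp S.subtype with hf
    have hfinj : Function.Injective f :=
      Subtype.coe_injective.comp Subtype.coe_injective
    set A : S := ⟨a', Subgroup.subset_closure (by simp)⟩ with hA
    set B : S := ⟨b', Subgroup.subset_closure (by simp)⟩ with hB
    have hfA : f A = a := rfl
    have hfB : f B = b := rfl
    have hA2 : orderOf A = 2 := by
      rw [← orderOf_injective f hfinj A, hfA, horda]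
    have hB2 : orderOf B = 2 := by
      rw [← orderOf_injective f hfinj B, hfB, hordb]
    have hAB : A = B := uniq_involution_aux (hgen A) (hgen B) hA2 hB2
    have hab : a = b := by rw [← hfA, ← hfB, hAB]
    have ht1 : t = 1 := by rw [ht, hab, hbb]
    rw [hn, ht1, orderOf_one] at h2
    omega
  -- `orderOf t` divides 9
  have hdvd9 : orderOf t ∣ 9 := by
    have h3 : ∀ p : ℕ, p.Prime → p ∣ orderOf t → p = 3 := by
      intro p hp hd
      rcases (hpi p hp).mp ⟨t, hd⟩ with h | h
      · exact absurd (h ▸ hd) hodd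
      · exact h
    have h5 : ¬ 5 ∣ orderOf t := fun h => by
      have := h3 5 (by norm_num) h; omega
    have h7 : ¬ 7 ∣ orderOf t := fun h => by
      have := h3 7 (by norm_num) h; omega
    have e2 : orderOf t % 2 ≠ 0 := fun h => hodd (Nat.dvd_of_mod_eq_zero h)
    have e5 : orderOf t % 5 ≠ 0 := fun h => h5 (Nat.dvd_of_mod_eq_zero h)
    have e7 : orderOf t % 7 ≠ 0 := fun h => h7 (Nat.dvd_of_mod_eq_zero h)
    obtain ⟨n, hn⟩ : ∃ n, orderOf t = n := ⟨_, rfl⟩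
    rw [hn] at hle hnz e2 e5 e7 ⊢
    have : n = 1 ∨ n = 3 ∨ n = 9 := by interval_cases n <;> omega
    rcases this with h | h | h <;> rw [h] <;> norm_num
  have h9 : t ^ 9 = 1 := orderOf_dvd_iff_pow_eq_one.mp hdvd9
  have h4 : a * t ^ 4 * a⁻¹ = (t ^ 4)⁻¹ := by
    rw [← conj_pow, hata, inv_pow]
  have h36 : t ^ 36 = 1 := by
    rw [show (36 : ℕ) = 9 * 4 from rfl, pow_mul, h9, one_pow]
  refine ⟨h9, t ^ 4 * a, ?_, ?_, ?_⟩
  · intro h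
    have ha' : a = (t ^ 4)⁻¹ := (inv_eq_of_mul_eq_one_right h).symm
    have ha9 : a ^ 9 = 1 := by
      rw [ha', ← inv_pow, ← pow_mul]
      simp [show (4 * 9 : ℕ) = 36 from rfl, h36]
    have : a = 1 := by
      calc a = (a ^ 2) ^ 4 * a := by rw [ha2, one_pow, one_mul]
        _ = a ^ 9 := by rw [← pow_mul, ← pow_succ]
        _ = 1 := ha9
    exact ha1 this
  · calc (t ^ 4 * a) ^ 2 = t ^ 4 * (a * t ^ 4 * a⁻¹) * (a * a) := by rw [sq]; group
      _ = t ^ 4 * (t ^ 4)⁻¹ * 1 := by rw [h4, haa]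
      _ = 1 := by group
  · have hstep : t ^ 4 * a * b = t ^ 5 := by rw [mul_assoc, ← ht, ← pow_succ]
    have h5' : a⁻¹ * (t ^ 4)⁻¹ = t ^ 4 * a⁻¹ := by rw [← h4]; group
    calc t ^ 4 * a * b * (t ^ 4 * a)⁻¹ = t ^ 5 * (a⁻¹ * (t ^ 4)⁻¹) := by
            rw [hstep, mul_inv_rev]
      _ = t ^ 5 * (t ^ 4 * a⁻¹) := by rw [h5']
      _ = t ^ 9 * a⁻¹ := by rw [← mul_assoc, ← pow_add]
      _ = a := by rw [h9, one_mul, hainv]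
end

section
/- Let G be a group satisfying hypothesis (H*). Let a be an involution of G and let x ∈ G have order 3 with a * x * a⁻¹ = x⁻¹. Then the centralizer C_G(x) is commutative, every element c of C_G(x) satisfies c^9 = 1 (so C_G(x) is an abelian 3-group of exponent at most 9), and for every c ∈ C_G(x) one has a * c * a⁻¹ = c⁻¹ (a acts on C_G(x) as inversion). -/
/-- A nonzero natural number whose only prime factor is `3` is a power of `3`. -/
lemma only3_pow (n : ℕ) : n ≠ 0 → (∀ p : ℕ, p.Prime → p ∣ n → p = 3) → ∃ k, n = 3 ^ k := by
  induction n using Nat.strong_induction_on with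
  | _ n ih =>
    intro hn h
    rcases eq_or_ne n 1 with rfl | h1
    · exact ⟨0, rfl⟩
    · have hp := Nat.minFac_prime h1
      have hd := Nat.minFac_dvd n
      have h3 : (3 : ℕ) ∣ n := (h _ hp hd) ▸ hd
      obtain ⟨m, rfl⟩ := h3
      have hm : m ≠ 0 := by rintro rfl; simp at hn
      have hlt : m < 3 * m := by omega
      obtain ⟨k, rfl⟩ := ih m hlt hm (fun p hp hpd => h p hp (Dvd.dvd.mul_left hpd 3))
      exact ⟨k + 1, by ring⟩

/-- Lemma 3: in a group satisfying (H*), if `a` is an involution and `x` has order 3 with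
`a * x * a⁻¹ = x⁻¹`, then `C_G(x)` is an abelian 3-group of exponent at most 9 on which
`a` acts by inversion. -/
theorem statement_7 (G : Type*) [Group G] (hG : HypHStar G)
    (a x : G) (ha1 : a ≠ 1) (ha2 : a ^ 2 = 1)
    (hx : orderOf x = 3) (hax : a * x * a⁻¹ = x⁻¹) :
    (∀ c ∈ Subgroup.centralizer {x}, ∀ d ∈ Subgroup.centralizer {x}, c * d = d * c) ∧
    (∀ c ∈ Subgroup.centralizer ({x} : Set G), c ^ 9 = 1) ∧
    (∀ c ∈ Subgroup.centralizer ({x} : Set G), a * c * a⁻¹ = c⁻¹) := by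
  classical
  obtain ⟨⟨hper, hpi, hprod⟩, hcent⟩ := hG
  set C := Subgroup.centralizer ({x} : Set G) with hC
  have haa : a * a = 1 := by rw [← pow_two]; exact ha2
  have hainv : a⁻¹ = a := inv_eq_of_mul_eq_one_left haa
  rw [hainv] at hax
  -- basic commutation relations
  have e_xia : x⁻¹ * a = a * x := by
    rw [← hax, mul_assoc, mul_assoc, haa, mul_one]
  have e_xa : x * a = a * x⁻¹ := by
    rw [← hax, ← mul_assoc, ← mul_assoc, haa, one_mul]
  -- a is not in C
  have haC : a ∉ C := by
    intro hmem
    have hxa : x * a = a * x := Subgroup.mem_centralizer_iff.mp hmem x rfl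
    have hxx : x⁻¹ = x := by
      rw [← hax, ← hxa, mul_assoc, haa, mul_one]
    have hx2 : x ^ 2 = 1 := by
      rw [pow_two]
      nth_rewrite 1 [← hxx]
      exact inv_mul_cancel x
    have h32 : (3 : ℕ) ∣ 2 := hx ▸ orderOf_dvd_of_pow_eq_one hx2
    omega
  -- elements of C have odd order
  have hodd : ∀ c ∈ C, ¬ (2 ∣ orderOf c) := by
    rintro c hc ⟨m, hm⟩
    have hpos : 0 < orderOf c := (hper c).orderOf_pos
    have hb2 : (c ^ m) ^ 2 = 1 := by
      rw [← pow_mul, Nat.mul_comm, ← hm, pow_orderOf_eq_one]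
    have hb1 : c ^ m ≠ 1 := by
      intro h
      have hd := orderOf_dvd_of_pow_eq_one h
      have hle := Nat.le_of_dvd (by omega) hd
      omega
    have hcx : x * c = c * x := Subgroup.mem_centralizer_iff.mp hc x rfl
    have hcomm : Commute x (c ^ m) := (Commute.pow_right hcx m)
    have hxb : x ∈ Subgroup.centralizer ({c ^ m} : Set G) := by
      rw [Subgroup.mem_centralizer_iff]
      simp only [Set.mem_singleton_iff, forall_eq]
      exact hcomm.eq.symm
    obtain ⟨n, hn⟩ := (hcent (c ^ m) hb1 hb2).1 ⟨x, hxb⟩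
    rw [Subgroup.orderOf_mk, hx] at hn
    have h3 : (3 : ℕ) = 2 ^ n := hn
    rcases n with _ | n
    · simp at h3
    · rw [pow_succ] at h3; omega
  -- elements of C have order a power of 3
  have hpow3 : ∀ c ∈ C, ∃ k, orderOf c = 3 ^ k := by
    intro c hc
    apply only3_pow _ (hper c).orderOf_pos.ne'
    intro p hp hpd
    rcases (hpi p hp).1 ⟨c, hpd⟩ with h2 | h3
    · exact absurd (h2 ▸ hpd) (hodd c hc)
    · exact h3
  -- key claim: a inverts every element of C
  have key : ∀ c ∈ C, a * c * a⁻¹ = c⁻¹ := by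
    intro c hc
    have hcx : x * c = c * x := Subgroup.mem_centralizer_iff.mp hc x rfl
    have e_xic : x⁻¹ * c = c * x⁻¹ := ((Commute.inv_left hcx : Commute x⁻¹ c)).eq
    have e1 : (a * c) ^ 2 = a * c * a * c := by rw [pow_two]; group
    have ht2C : (a * c) ^ 2 ∈ C := by
      rw [Subgroup.mem_centralizer_iff]
      simp only [Set.mem_singleton_iff, forall_eq]
      rw [e1]
      calc x * (a * c * a * c) = (x * a) * c * a * c := by simp [mul_assoc]
        _ = (a * x⁻¹) * c * a * c := by rw [e_xa]
        _ = a * (x⁻¹ * c) * a * c := by simp [mul_assoc]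
        _ = a * (c * x⁻¹) * a * c := by rw [e_xic]
        _ = a * c * (x⁻¹ * a) * c := by simp [mul_assoc]
        _ = a * c * (a * x) * c := by rw [e_xia]
        _ = a * c * a * (x * c) := by simp [mul_assoc]
        _ = a * c * a * (c * x) := by rw [hcx]
        _ = a * c * a * c * x := by simp [mul_assoc]
    by_cases h2 : (a * c) ^ 2 = 1
    · have h4 : a * c * a * c = 1 := by rw [← e1, h2]
      rw [hainv]
      exact mul_eq_one_iff_eq_inv.mp h4
    · exfalso
      have hnpos : 0 < orderOf (a * c) := (hper (a * c)).orderOf_pos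
      set t := a * c with ht
      set n := orderOf t with hn
      rcases Nat.even_or_odd n with he | ho
      · obtain ⟨m, hm⟩ := he
        have hmpos : 0 < m := by omega
        have hb2 : (t ^ m) ^ 2 = 1 := by
          rw [← pow_mul]
          have hmn : m * 2 = n := by omega
          rw [hmn, hn, pow_orderOf_eq_one]
        have hb1 : t ^ m ≠ 1 := by
          intro h
          have hd := orderOf_dvd_of_pow_eq_one h
          have hle := Nat.le_of_dvd hmpos hd
          omega
        have hsb : t ^ 2 ∈ Subgroup.centralizer ({t ^ m} : Set G) := by
          rw [Subgroup.mem_centralizer_iff]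
          simp only [Set.mem_singleton_iff, forall_eq]
          rw [← pow_add, ← pow_add, Nat.add_comm]
        obtain ⟨j, hj⟩ := (hcent (t ^ m) hb1 hb2).1 ⟨t ^ 2, hsb⟩
        rw [Subgroup.orderOf_mk] at hj
        have hje : orderOf (t ^ 2) = 2 ^ j := hj
        have ho2 := hodd _ ht2C
        rcases j with _ | j
        · rw [pow_zero] at hje
          exact h2 (orderOf_eq_one_iff.mp hje)
        · exact ho2 (by rw [hje]; exact dvd_pow_self 2 j.succ_ne_zero)
      · obtain ⟨m, hm⟩ := ho
        have htC : t ∈ C := by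
          have he2 : (t ^ 2) ^ (m + 1) = t := by
            rw [← pow_mul]
            have h21 : 2 * (m + 1) = n + 1 := by omega
            rw [h21, pow_succ, hn, pow_orderOf_eq_one, one_mul]
          rw [← he2]
          exact pow_mem ht2C (m + 1)
        apply haC
        have hat : a = t * c⁻¹ := by rw [ht]; group
        rw [hat]
        exact mul_mem htC (inv_mem hc)
  refine ⟨?_, ?_, key⟩
  · -- commutativity
    intro c hc d hd
    have h1 := key c hc
    have h2 := key d hd
    have h3 := key (c * d) (mul_mem hc hd)
    have h5 : a * (c * d) * a⁻¹ = (a * c * a⁻¹) * (a * d * a⁻¹) := by group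
    rw [h3, h1, h2, mul_inv_rev] at h5
    have h6 := congrArg (fun z : G => z⁻¹) h5
    simpa [mul_inv_rev] using h6
  · -- exponent at most 9
    intro c hc
    have ht2 : (a * c) ^ 2 = 1 := by
      have e : (a * c) ^ 2 = (a * c * a⁻¹) * c := by rw [pow_two, hainv]; group
      rw [e, key c hc, inv_mul_cancel]
    haveI : Fact (Nat.Prime 2) := ⟨by norm_num⟩
    have hoa : orderOf a = 2 := orderOf_eq_prime ha2 ha1
    have hoac : orderOf (a * c) ≤ 2 :=
      Nat.le_of_dvd (by norm_num) (orderOf_dvd_of_pow_eq_one ht2)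
    have h9 : orderOf c ≤ 9 := by
      have hp := hprod a (a * c) (by omega) (by omega)
      have e : a * (a * c) = c := by rw [← mul_assoc, haa, one_mul]
      rwa [e] at hp
    obtain ⟨k, hk⟩ := hpow3 c hc
    have hk2 : k ≤ 2 := by
      by_contra hcon
      push_neg at hcon
      have : (3 : ℕ) ^ 3 ≤ 3 ^ k := Nat.pow_le_pow_right (by norm_num) hcon
      rw [hk] at h9
      norm_num at this
      omega
    have hdvd : orderOf c ∣ 9 := by
      rw [hk]
      have h9e : (9 : ℕ) = 3 ^ 2 := by norm_num
      rw [h9e]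
      exact pow_dvd_pow 3 hk2
    exact orderOf_dvd_iff_pow_eq_one.mp hdvd
end

section
/- Let G be a group satisfying hypothesis (H*) and let t ∈ G have order 4. Then: (i) t is not conjugate to t⁻¹ in G, i.e., there is no g ∈ G with g * t * g⁻¹ = t⁻¹; and (ii) every element u ∈ G of order 4 is conjugate in G to t or to t⁻¹, i.e., there exists g ∈ G with g * t * g⁻¹ = u or g * t⁻¹ * g⁻¹ = u. -/
lemma lc2_commute {K : Type*} [Group K] (hK : IsLocallyCyclic2Group K) (x y : K) :
    x * y = y * x := by
  set S := Subgroup.closure ({x, y} : Set K) with hS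
  have hfg : S.FG := (Subgroup.fg_iff S).mpr ⟨{x, y}, hS.symm, (Set.finite_singleton y).insert x⟩
  have hcyc := hK.2 S hfg
  obtain ⟨g, hg⟩ := hcyc.exists_generator
  obtain ⟨m, hm⟩ := hg ⟨x, Subgroup.subset_closure (by simp)⟩
  obtain ⟨k, hk⟩ := hg ⟨y, Subgroup.subset_closure (by simp)⟩
  have hm' : (g : K) ^ m = x := by
    have := congrArg Subtype.val hm; simpa using this
  have hk' : (g : K) ^ k = y := by
    have := congrArg Subtype.val hk; simpa using this
  rw [← hm', ← hk', ← zpow_add, ← zpow_add, add_comm]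

lemma zpow_invol_eq {K : Type*} [Group K] {g : K} {n : ℕ} (hg : orderOf g = 2 ^ (n + 1))
    {m : ℤ} (h1 : g ^ m ≠ 1) (h2 : (g ^ m) ^ 2 = 1) :
    g ^ m = g ^ ((2 : ℤ) ^ n) := by
  have hdvd : ((2 : ℤ) ^ (n + 1)) ∣ 2 * m := by
    have hone : g ^ (2 * m) = 1 := by
      rw [two_mul, zpow_add, ← sq]; exact h2
    have := orderOf_dvd_iff_zpow_eq_one.mpr hone
    rw [hg] at this; exact_mod_cast this
  have hdvd' : ((2 : ℤ) ^ n) ∣ m := by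
    rw [pow_succ, mul_comm ((2:ℤ) ^ n) 2] at hdvd
    exact (mul_dvd_mul_iff_left (two_ne_zero)).mp hdvd
  obtain ⟨q, hq⟩ := hdvd'
  have hzord : g ^ ((2 : ℤ) ^ (n + 1)) = 1 := by
    apply orderOf_dvd_iff_zpow_eq_one.mp
    rw [hg]; push_cast; rfl
  have hz2 : (g ^ ((2 : ℤ) ^ n)) ^ (2 : ℤ) = 1 := by
    rw [← zpow_mul, ← pow_succ]; exact hzord
  have z1 : g ^ ((2 : ℤ) ^ n * 2) = 1 := by rw [← pow_succ]; exact hzord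
  rcases Int.even_or_odd q with ⟨r, hr⟩ | ⟨r, hr⟩
  · exfalso
    apply h1
    rw [hq, hr]
    have he : (2:ℤ) ^ n * (r + r) = ((2:ℤ) ^ n * 2) * r := by ring
    rw [he, zpow_mul, z1, one_zpow]
  · rw [hq, hr]
    have he : (2:ℤ) ^ n * (2 * r + 1) = ((2:ℤ) ^ n * 2) * r + (2:ℤ) ^ n := by ring
    rw [he, zpow_add, zpow_mul, z1, one_zpow, one_mul]

lemma lc2_unique_involution {K : Type*} [Group K] (hK : IsLocallyCyclic2Group K)
    {x y : K} (hx1 : x ≠ 1) (hx2 : x ^ 2 = 1) (hy1 : y ≠ 1) (hy2 : y ^ 2 = 1) :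
    x = y := by
  set S := Subgroup.closure ({x, y} : Set K) with hS
  have hfg : S.FG := (Subgroup.fg_iff S).mpr ⟨{x, y}, hS.symm, (Set.finite_singleton y).insert x⟩
  obtain ⟨g, hg⟩ := (hK.2 S hfg).exists_generator
  obtain ⟨m, hm⟩ := hg ⟨x, Subgroup.subset_closure (by simp)⟩
  obtain ⟨k, hk⟩ := hg ⟨y, Subgroup.subset_closure (by simp)⟩
  have hm' : (g : K) ^ m = x := by
    have := congrArg Subtype.val hm; simpa using this
  have hk' : (g : K) ^ k = y := by
    have := congrArg Subtype.val hk; simpa using this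
  obtain ⟨N, hN⟩ := hK.1 (g : K)
  cases N with
  | zero =>
    exfalso
    have hg1 : (g : K) = 1 := orderOf_eq_one_iff.mp (by simpa using hN)
    exact hx1 (by rw [← hm', hg1, one_zpow])
  | succ n =>
    have e1 : (g : K) ^ m = (g : K) ^ ((2:ℤ) ^ n) :=
      zpow_invol_eq hN (by rw [hm']; exact hx1) (by rw [hm']; exact hx2)
    have e2 : (g : K) ^ k = (g : K) ^ ((2:ℤ) ^ n) :=
      zpow_invol_eq hN (by rw [hk']; exact hy1) (by rw [hk']; exact hy2)
    rw [← hm', ← hk', e1, e2]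

lemma invol_eq_of_comm {G : Type*} [Group G] (hG : HypHStar G) {a z : G}
    (ha1 : a ≠ 1) (ha2 : a ^ 2 = 1) (hz1 : z ≠ 1) (hz2 : z ^ 2 = 1)
    (hcomm : z * a = a * z) : z = a := by
  have hC := hG.2 a ha1 ha2
  have hza : z ∈ Subgroup.centralizer ({a} : Set G) :=
    Subgroup.mem_centralizer_singleton_iff.mpr hcomm
  have haa : a ∈ Subgroup.centralizer ({a} : Set G) :=
    Subgroup.mem_centralizer_singleton_iff.mpr rfl
  have := lc2_unique_involution hC
    (x := ⟨z, hza⟩) (y := ⟨a, haa⟩)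
    (fun h => hz1 (congrArg Subtype.val h))
    (Subtype.ext (by push_cast; exact hz2))
    (fun h => ha1 (congrArg Subtype.val h))
    (Subtype.ext (by push_cast; exact ha2))
  exact congrArg Subtype.val this

lemma invol_conj {G : Type*} [Group G] (hG : HypHStar G) {a b : G}
    (ha1 : a ≠ 1) (ha2 : a ^ 2 = 1) (hb1 : b ≠ 1) (hb2 : b ^ 2 = 1) :
    ∃ g : G, g * a * g⁻¹ = b := by
  have hainv : a⁻¹ = a := inv_eq_of_mul_eq_one_right (by rw [← sq]; exact ha2)
  have hbinv : b⁻¹ = b := inv_eq_of_mul_eq_one_right (by rw [← sq]; exact hb2)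
  have hxinv : (a * b)⁻¹ = b * a := by rw [mul_inv_rev, hainv, hbinv]
  set x := a * b with hx
  have hxa : a * x * a⁻¹ = x⁻¹ := by
    rw [hx, hxinv, hainv]
    calc a * (a * b) * a = a * a * (b * a) := by group
      _ = b * a := by rw [← sq, ha2, one_mul]
  have hxb : b * x * b⁻¹ = x⁻¹ := by
    rw [hx, hxinv, hbinv]
    calc b * (a * b) * b = b * a * (b * b) := by group
      _ = b * a := by rw [← sq, hb2, mul_one]
  set n := orderOf x with hn
  have hnpos : 0 < n := (hG.1.1 x).orderOf_pos
  have hxn : x ^ (n : ℤ) = 1 := by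
    rw [zpow_natCast]; exact pow_orderOf_eq_one x
  have key : ∀ c : G, c * x * c⁻¹ = x⁻¹ → ∀ j : ℤ, x ^ j * c = c * x ^ (-j) := by
    intro c hc j
    have h2 : c * x ^ (-j) * c⁻¹ = x ^ j := by
      calc c * x ^ (-j) * c⁻¹ = (c * x * c⁻¹) ^ (-j) := conj_zpow.symm
        _ = (x⁻¹) ^ (-j) := by rw [hc]
        _ = x ^ j := by rw [inv_zpow, ← zpow_neg, neg_neg]
    rw [← h2]; group
  rcases Nat.even_or_odd n with ⟨m, hm2⟩ | ⟨m, hm2⟩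
  · -- n = m + m : the middle element equals both a and b
    have hmpos : 0 < m := by omega
    have hz2 : (x ^ (m : ℤ)) ^ 2 = 1 := by
      rw [sq, ← zpow_add]
      have hmm : (m : ℤ) + m = (n : ℤ) := by push_cast; omega
      rw [hmm, hxn]
    have hz1 : x ^ (m : ℤ) ≠ 1 := by
      intro h
      have hdvd : (n : ℤ) ∣ (m : ℤ) := by
        rw [hn]; exact orderOf_dvd_iff_zpow_eq_one.mpr h
      have : n ∣ m := Int.ofNat_dvd.mp hdvd
      have := Nat.le_of_dvd hmpos this
      omega
    have hzinv : (x ^ (m : ℤ))⁻¹ = x ^ (m : ℤ) :=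
      inv_eq_of_mul_eq_one_right (by rw [← sq]; exact hz2)
    have hneg : x ^ (-(m : ℤ)) = x ^ (m : ℤ) := by rw [zpow_neg, hzinv]
    have hcomma : x ^ (m : ℤ) * a = a * x ^ (m : ℤ) := by
      rw [key a hxa m, hneg]
    have hcommb : x ^ (m : ℤ) * b = b * x ^ (m : ℤ) := by
      rw [key b hxb m, hneg]
    have hza : x ^ (m : ℤ) = a := invol_eq_of_comm hG ha1 ha2 hz1 hz2 hcomma
    have hzb : x ^ (m : ℤ) = b := invol_eq_of_comm hG hb1 hb2 hz1 hz2 hcommb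
    exact ⟨1, by rw [one_mul, inv_one, mul_one, ← hza, hzb]⟩
  · -- n = 2 * m + 1
    refine ⟨x ^ (m : ℤ), ?_⟩
    calc x ^ (m:ℤ) * a * (x ^ (m:ℤ))⁻¹
        = (x ^ (m:ℤ) * a) * x ^ (-(m:ℤ)) := by rw [zpow_neg]
      _ = a * x ^ (-(m:ℤ)) * x ^ (-(m:ℤ)) := by rw [key a hxa m]
      _ = a * x ^ (-(m:ℤ) + -(m:ℤ)) := by rw [mul_assoc, ← zpow_add]
      _ = a * x ^ (1 - (n:ℤ)) := by
          congr 1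
          have hni : (n:ℤ) = 2 * m + 1 := by push_cast; omega
          rw [hni]; ring
      _ = a * x := by rw [zpow_sub, hxn, inv_one, mul_one, zpow_one]
      _ = b := by rw [hx, ← mul_assoc, ← sq, ha2, one_mul]

/-- Lemma 5: in a group satisfying (H*), an element `t` of order 4 is not conjugate to its
inverse, and every element of order 4 is conjugate either to `t` or to `t⁻¹`. -/
theorem statement_9 (G : Type*) [Group G] (hG : HypHStar G)
    (t : G) (ht : orderOf t = 4) :
    (¬ ∃ g : G, g * t * g⁻¹ = t⁻¹) ∧
    ∀ u : G, orderOf u = 4 → ∃ g : G, g * t * g⁻¹ = u ∨ g * t⁻¹ * g⁻¹ = u := by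
  have invol4 : ∀ v : G, orderOf v = 4 → v ^ 2 ≠ 1 ∧ (v ^ 2) ^ 2 = 1 := by
    intro v hv
    constructor
    · intro h
      have := orderOf_dvd_of_pow_eq_one h
      rw [hv] at this
      exact absurd (Nat.le_of_dvd (by norm_num) this) (by norm_num)
    · rw [← pow_mul]
      have : 2 * 2 = 4 := by norm_num
      rw [this, ← hv]
      exact pow_orderOf_eq_one v
  obtain ⟨ht2ne, ht2sq⟩ := invol4 t ht
  have comm3 : ∀ w : G, w * w ^ 2 = w ^ 2 * w := by
    intro w
    rw [← pow_succ, ← pow_succ']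
  constructor
  · rintro ⟨g, hgt⟩
    have hC := hG.2 (t ^ 2) ht2ne ht2sq
    have hg2 : g * t ^ 2 * g⁻¹ = t ^ 2 := by
      calc g * t ^ 2 * g⁻¹ = (g * t * g⁻¹) ^ 2 := conj_pow.symm
        _ = (t⁻¹) ^ 2 := by rw [hgt]
        _ = (t ^ 2)⁻¹ := by rw [inv_pow]
        _ = t ^ 2 := inv_eq_of_mul_eq_one_right (by rw [← sq]; exact ht2sq)
    have gmem : g ∈ Subgroup.centralizer ({t ^ 2} : Set G) :=
      Subgroup.mem_centralizer_singleton_iff.mpr (mul_inv_eq_iff_eq_mul.mp hg2)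
    have tmem : t ∈ Subgroup.centralizer ({t ^ 2} : Set G) :=
      Subgroup.mem_centralizer_singleton_iff.mpr (comm3 t)
    have hcomm := lc2_commute hC ⟨g, gmem⟩ ⟨t, tmem⟩
    have hgtc : g * t = t * g := by
      have := congrArg Subtype.val hcomm; simpa using this
    rw [hgtc, mul_inv_cancel_right] at hgt
    have : t * t = 1 := mul_eq_one_iff_eq_inv.mpr hgt
    exact ht2ne (by rw [sq]; exact this)
  · intro u hu
    obtain ⟨hu2ne, hu2sq⟩ := invol4 u hu
    obtain ⟨h, hh⟩ := invol_conj hG ht2ne ht2sq hu2ne hu2sq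
    have hC := hG.2 (u ^ 2) hu2ne hu2sq
    have ht'2 : (h * t * h⁻¹) ^ 2 = u ^ 2 := by rw [conj_pow]; exact hh
    have t'mem : h * t * h⁻¹ ∈ Subgroup.centralizer ({u ^ 2} : Set G) :=
      Subgroup.mem_centralizer_singleton_iff.mpr (by rw [← ht'2]; exact comm3 _)
    have umem : u ∈ Subgroup.centralizer ({u ^ 2} : Set G) :=
      Subgroup.mem_centralizer_singleton_iff.mpr (comm3 u)
    have hcomm := lc2_commute hC ⟨h * t * h⁻¹, t'mem⟩ ⟨u, umem⟩
    have hcm : Commute (h * t * h⁻¹) u := by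
      have := congrArg Subtype.val hcomm; simpa [Commute, SemiconjBy] using this
    have hw2 : (h * t * h⁻¹ * u⁻¹) ^ 2 = 1 := by
      rw [hcm.inv_right.mul_pow, ht'2, inv_pow, mul_inv_cancel]
    by_cases hw : h * t * h⁻¹ * u⁻¹ = 1
    · exact ⟨h, Or.inl (mul_inv_eq_one.mp hw)⟩
    · have wmem : h * t * h⁻¹ * u⁻¹ ∈ Subgroup.centralizer ({u ^ 2} : Set G) :=
        mul_mem t'mem (inv_mem umem)
    -- w commutes with u^2 since it lies in the centralizer
      have hwu2 : (h * t * h⁻¹ * u⁻¹) * u ^ 2 = u ^ 2 * (h * t * h⁻¹ * u⁻¹) :=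
        Subgroup.mem_centralizer_singleton_iff.mp wmem
      have hwe : h * t * h⁻¹ * u⁻¹ = u ^ 2 :=
        invol_eq_of_comm hG hu2ne hu2sq hw hw2 hwu2
      refine ⟨h, Or.inr ?_⟩
      have h5 : h * t * h⁻¹ = u⁻¹ := by
        have : h * t * h⁻¹ = u ^ 2 * u := mul_inv_eq_iff_eq_mul.mp hwe
        rw [this]
        refine eq_inv_of_mul_eq_one_left ?_
        calc u ^ 2 * u * u = u ^ 4 := by rw [← pow_succ, ← pow_succ]
          _ = 1 := by rw [← hu]; exact pow_orderOf_eq_one u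
      calc h * t⁻¹ * h⁻¹ = (h * t * h⁻¹)⁻¹ := by group
        _ = u := by rw [h5, inv_inv]
end

section
/- The group presented on two generators t, x with defining relations t^4 = 1, x^9 = 1, (t^2 * x)^2 = 1, x⁻¹ * (t⁻¹ * x * t)⁻¹ * x * (t⁻¹ * x * t) = 1 (i.e., x commutes with t⁻¹ x t), (t * x)^8 = 1, and (t⁻¹ * x⁻¹ * t * x)^9 = 1 has cardinality 324; it is isomorphic to a semidirect product (C9 × C9) ⋊ C4. -/
/-!
Let `S = (C₉ × C₉) ⋊ C₄`, the generator of `C₄` acting by `σ (a, b) = (b, a⁻¹)`. The elements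
`t ↦ (1, ofAdd 1)` and `x ↦ ((ofAdd 1, 1), 1)` of `S` satisfy the six relations (a finite
computation in `S`), which gives `P → S`. Conversely, in `P` the relations `t⁴ = 1` and
`(t²x)² = 1` say that `t²` inverts `x`, so with `y = t⁻¹xt` conjugation by `t` sends `x ↦ y⁻¹` and
`y ↦ x`. As `x` and `y` commute and have order dividing 9, this is the action `σ` on the image of
`C₉ × C₉ → P, (a, b) ↦ xᵃyᵇ`, and the universal property of the semidirect product gives `S → P`.
The two maps are inverse to each other on generators, so `|P| = |S| = 324`.
-/

/-- The relations `t⁴, x⁹, (t²x)², [x, xᵗ], (tx)⁸, [t,x]⁹` on generators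
`t = of 0`, `x = of 1`. -/
def rels17 : Set (FreeGroup (Fin 2)) :=
  { (FreeGroup.of 0) ^ 4, (FreeGroup.of 1) ^ 9,
    ((FreeGroup.of 0) ^ 2 * FreeGroup.of 1) ^ 2,
    (FreeGroup.of 1)⁻¹ * ((FreeGroup.of 0)⁻¹ * FreeGroup.of 1 * FreeGroup.of 0)⁻¹ *
      FreeGroup.of 1 * ((FreeGroup.of 0)⁻¹ * FreeGroup.of 1 * FreeGroup.of 0),
    (FreeGroup.of 0 * FreeGroup.of 1) ^ 8,
    ((FreeGroup.of 0)⁻¹ * (FreeGroup.of 1)⁻¹ * FreeGroup.of 0 * FreeGroup.of 1) ^ 9 }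

open Multiplicative

section CyclicHom

variable {n : ℕ} [NeZero n]

lemma Multiplicative.ofAdd_one_pow_val (z : Multiplicative (ZMod n)) :
    ofAdd (1 : ZMod n) ^ z.toAdd.val = z := by
  rw [← ofAdd_nsmul, nsmul_one, ZMod.natCast_zmod_val, ofAdd_toAdd]

lemma Multiplicative.zmod_monoidHom_ext {M : Type*} [Monoid M]
    {f g : Multiplicative (ZMod n) →* M} (h : f (ofAdd 1) = g (ofAdd 1)) : f = g :=
  MonoidHom.ext fun z => by rw [← ofAdd_one_pow_val z, map_pow, map_pow, h]

variable {G : Type*} [Group G]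

def zmodPowHom (g : G) (hg : g ^ n = 1) : Multiplicative (ZMod n) →* G where
  toFun z := g ^ z.toAdd.val
  map_one' := by simp
  map_mul' a b := by
    rw [toAdd_mul, ZMod.val_add, ← pow_eq_pow_mod _ hg, pow_add]

lemma zmodPowHom_apply (g : G) (hg : g ^ n = 1) (z : Multiplicative (ZMod n)) :
    zmodPowHom g hg z = g ^ z.toAdd.val := rfl

@[simp]
lemma zmodPowHom_ofAdd_one (g : G) (hg : g ^ n = 1) : zmodPowHom g hg (ofAdd 1) = g := by
  rw [zmodPowHom_apply, toAdd_ofAdd, ZMod.val_one_eq_one_mod, ← pow_eq_pow_mod 1 hg, pow_one]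

lemma Commute.zmodPowHom {g h : G} (hgh : Commute g h) (hg : g ^ n = 1) (hh : h ^ n = 1)
    (a b : Multiplicative (ZMod n)) : Commute (zmodPowHom g hg a) (zmodPowHom h hh b) :=
  hgh.pow_pow _ _

end CyclicHom

lemma MonoidHom.prod_ext {M N P : Type*} [Monoid M] [Monoid N] [Monoid P]
    {f g : M × N →* P} (hl : f.comp (inl M N) = g.comp (inl M N))
    (hr : f.comp (inr M N) = g.comp (inr M N)) : f = g := by
  ext ⟨m, n⟩
  rw [← mul_one m, ← one_mul n, ← Prod.mk_mul_mk, map_mul, map_mul]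
  exact congr_arg₂ (· * ·) (DFunLike.congr_fun hl m) (DFunLike.congr_fun hr n)

lemma MonoidHom.comp_pow_of_comp {M N : Type*} [Monoid M] [Monoid N] (f : M →* N)
    {a : MulAut M} {b : MulAut N} (h : f.comp a.toMonoidHom = b.toMonoidHom.comp f) (k : ℕ) :
    f.comp (a ^ k).toMonoidHom = (b ^ k).toMonoidHom.comp f := by
  induction k with
  | zero => rfl
  | succ k ih =>
    ext m
    have hm := DFunLike.congr_fun h m
    have ihm := DFunLike.congr_fun ih (a m)
    simp only [MonoidHom.comp_apply, MulEquiv.coe_toMonoidHom] at hm ihm ⊢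
    rw [pow_succ, pow_succ, MulAut.mul_apply, MulAut.mul_apply, ihm, hm]

lemma comp_aut_eq_conj_comp_of_ofAdd_one {n : ℕ} [NeZero n] {N H : Type*} [Group N] [Group H]
    (φ : Multiplicative (ZMod n) →* MulAut N) (fn : N →* H)
    (fg : Multiplicative (ZMod n) →* H)
    (h : fn.comp (φ (ofAdd 1)).toMonoidHom = (MulAut.conj (fg (ofAdd 1))).toMonoidHom.comp fn)
    (g : Multiplicative (ZMod n)) :
    fn.comp (φ g).toMonoidHom = (MulAut.conj (fg g)).toMonoidHom.comp fn := by
  rw [← ofAdd_one_pow_val g, map_pow, map_pow, map_pow]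
  exact fn.comp_pow_of_comp h _

namespace Presentation17

abbrev C9 := Multiplicative (ZMod 9)
abbrev C4 := Multiplicative (ZMod 4)

def σ : MulAut (C9 × C9) where
  toFun p := (p.2, p.1⁻¹)
  invFun p := (p.2⁻¹, p.1)
  left_inv p := by simp
  right_inv p := by simp
  map_mul' p q := by simp [mul_comm]

lemma σ_pow_four : σ ^ 4 = 1 := by
  ext p <;> simp [σ, pow_succ, MulAut.mul_apply]

def φ : C4 →* MulAut (C9 × C9) := zmodPowHom σ σ_pow_four

abbrev S := (C9 × C9) ⋊[φ] C4

open SemidirectProduct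

def tS : S := inr (ofAdd 1)
def xS : S := inl (ofAdd 1, 1)

lemma lift_tS_xS_eq_one_of_mem_rels17 : ∀ r ∈ rels17, FreeGroup.lift ![tS, xS] r = 1 := by
  intro r hr
  simp only [rels17, Set.mem_insert_iff, Set.mem_singleton_iff] at hr
  rcases hr with rfl | rfl | rfl | rfl | rfl | rfl <;> decide +kernel

abbrev P := PresentedGroup rels17

abbrev t : P := .of 0
abbrev x : P := .of 1
def y : P := t⁻¹ * x * t

lemma t_pow_four : t ^ 4 = 1 := by
  have h := PresentedGroup.one_of_mem (x := .of 0 ^ 4) (show _ ∈ rels17 by simp [rels17])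
  rwa [map_pow] at h

lemma x_pow_nine : x ^ 9 = 1 := by
  have h := PresentedGroup.one_of_mem (x := .of 1 ^ 9) (show _ ∈ rels17 by simp [rels17])
  rwa [map_pow] at h

lemma t_sq_mul_x_sq : (t ^ 2 * x) ^ 2 = 1 := by
  have h := PresentedGroup.one_of_mem (x := (.of 0 ^ 2 * .of 1) ^ 2)
    (show _ ∈ rels17 by simp [rels17])
  rwa [map_pow, map_mul, map_pow] at h

lemma commute_x_y : Commute x y := by
  have h := PresentedGroup.one_of_mem (x := (.of 1)⁻¹ * ((.of 0)⁻¹ * .of 1 * .of 0)⁻¹ * .of 1 *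
    ((.of 0)⁻¹ * .of 1 * .of 0)) (show _ ∈ rels17 by simp [rels17])
  simp only [map_mul, map_inv] at h
  change x⁻¹ * y⁻¹ * x * y = 1 at h
  rw [← mul_inv_rev, mul_assoc, inv_mul_eq_one] at h
  exact h.symm

lemma y_pow_nine : y ^ 9 = 1 := by
  have hy : y = t⁻¹ * x * t⁻¹⁻¹ := by rw [inv_inv]; rfl
  rw [hy, conj_pow, x_pow_nine, mul_one, mul_inv_cancel]

lemma t_mul_x_mul_t_inv : t * x * t⁻¹ = y⁻¹ := by
  have ht : t ^ 3 = t⁻¹ := eq_inv_of_mul_eq_one_left (by rw [← pow_succ, t_pow_four])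
  have hx : t ^ 2 * x * t ^ 2 = x⁻¹ :=
    eq_inv_of_mul_eq_one_left (by rw [mul_assoc (t ^ 2 * x), ← sq, t_sq_mul_x_sq])
  calc t * x * t⁻¹ = t * x * t ^ 3 := by rw [ht]
    _ = t⁻¹ * (t ^ 2 * x * t ^ 2) * t := by group
    _ = y⁻¹ := by rw [hx, y]; group

def prodToP : C9 × C9 →* P :=
  (zmodPowHom x x_pow_nine).noncommCoprod (zmodPowHom y y_pow_nine)
    (commute_x_y.zmodPowHom x_pow_nine y_pow_nine)

lemma prodToP_ofAdd_one_one : prodToP (ofAdd 1, 1) = x := by simp [prodToP]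

lemma prodToP_one_ofAdd_one : prodToP (1, ofAdd 1) = y := by simp [prodToP]

lemma prodToP_comp_σ : prodToP.comp σ.toMonoidHom = (MulAut.conj t).toMonoidHom.comp prodToP := by
  refine MonoidHom.prod_ext ?_ ?_ <;> refine Multiplicative.zmod_monoidHom_ext ?_
  · change prodToP (1, ofAdd 1)⁻¹ = t * prodToP (ofAdd 1, 1) * t⁻¹
    rw [map_inv, prodToP_ofAdd_one_one, prodToP_one_ofAdd_one, t_mul_x_mul_t_inv]
  · change prodToP (ofAdd 1, 1) = t * prodToP (1, ofAdd 1) * t⁻¹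
    rw [prodToP_ofAdd_one_one, prodToP_one_ofAdd_one, y]
    group

def ofS : S →* P :=
  lift prodToP (zmodPowHom t t_pow_four) <| comp_aut_eq_conj_comp_of_ofAdd_one φ prodToP _ <| by
    simpa only [φ, zmodPowHom_ofAdd_one] using prodToP_comp_σ

lemma ofS_tS : ofS tS = t := by simp [ofS, tS]

lemma ofS_inl (p : C9 × C9) : ofS (inl p) = prodToP p := by simp [ofS]

def toS : P →* S := PresentedGroup.toGroup lift_tS_xS_eq_one_of_mem_rels17

lemma toS_t : toS t = tS := PresentedGroup.toGroup.of _

lemma toS_x : toS x = xS := PresentedGroup.toGroup.of _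

lemma toS_y : toS y = inl (1, ofAdd 1) := by
  rw [y, map_mul, map_mul, map_inv, toS_t, toS_x]
  decide +kernel

lemma ofS_comp_toS : ofS.comp toS = MonoidHom.id P := by
  refine PresentedGroup.ext fun i => ?_
  fin_cases i
  · exact (congr_arg ofS toS_t).trans ofS_tS
  · exact (congr_arg ofS toS_x).trans ((ofS_inl _).trans prodToP_ofAdd_one_one)

lemma toS_comp_ofS : toS.comp ofS = MonoidHom.id S := by
  refine hom_ext ?_ (Multiplicative.zmod_monoidHom_ext ?_)
  · refine MonoidHom.prod_ext ?_ ?_ <;> refine Multiplicative.zmod_monoidHom_ext ?_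
    · simp [ofS_inl, prodToP_ofAdd_one_one, toS_x, xS]
    · simp [ofS_inl, prodToP_one_ofAdd_one, toS_y]
  · exact (congr_arg toS ofS_tS).trans toS_t

def mulEquivS : P ≃* S := toS.toMulEquiv ofS ofS_comp_toS toS_comp_ofS

end Presentation17

/-- The group `⟨t, x ∣ t⁴, x⁹, (t²x)², [x, xᵗ], (tx)⁸, [t,x]⁹⟩` has order 324 and is a
semidirect product `(C₉ × C₉) ⋊ C₄`. -/
theorem statement_17 :
    Nat.card (PresentedGroup rels17) = 324 ∧
    ∃ φ : Multiplicative (ZMod 4) →*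
        MulAut (Multiplicative (ZMod 9) × Multiplicative (ZMod 9)),
      Nonempty (PresentedGroup rels17 ≃*
        (Multiplicative (ZMod 9) × Multiplicative (ZMod 9)) ⋊[φ] Multiplicative (ZMod 4)) := by
  refine ⟨?_, Presentation17.φ, ⟨Presentation17.mulEquivS⟩⟩
  rw [Nat.card_congr Presentation17.mulEquivS.toEquiv, SemidirectProduct.card]
  simp
end
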